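/- arXiv:1911.09111 — 3 statements merged into one kernel-verified Lean document; each statement's English description precedes it below -/
import Mathlib

section
/- For every α > 0, lim_{κ→∞} M(κ/2 + 1, κ + 1/2, −α²/4) = e^{−α²/8} and lim_{κ→∞} M(κ/2, κ + 1/2, −α²/4) = e^{−α²/8}, where the limits are taken as the real parameter κ tends to +∞. -/
open MeasureTheory Filter Set

noncomputable section

/-- The precipitation-free self-similar solution `ψ(x,t)`. -/
def psi (α β x t : ℝ) : ℝ :=
  if 0 < t then
    (α * β / 2) * Real.exp (α ^ 2 / 4) *
      ∫ ζ in Set.Ioi (max (|x| / Real.sqrt t) α), Real.exp (-ζ ^ 2 / 4)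
  else 0

/-- The profile `Ψ(η)` in similarity coordinates. -/
def PsiP (α β η : ℝ) : ℝ :=
  (α * β / 2) * Real.exp (α ^ 2 / 4) * ∫ ζ in Set.Ioi (max η α), Real.exp (-ζ ^ 2 / 4)

/-- Regularity of a weak solution: `w` is the spatial derivative of `u - ψ`;
both are continuous on `ℝ × [0,∞)` and bounded on `ℝ × [0,T]` for every `T > 0`. -/
def AuxReg (α β : ℝ) (u w : ℝ → ℝ → ℝ) : Prop :=
  (∀ t ∈ Set.Ici (0:ℝ), ∀ x : ℝ, HasDerivAt (fun y => u y t - psi α β y t) (w x t) x) ∧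
  ContinuousOn (fun q : ℝ × ℝ => u q.1 q.2 - psi α β q.1 q.2) (Set.univ ×ˢ Set.Ici 0) ∧
  ContinuousOn (fun q : ℝ × ℝ => w q.1 q.2) (Set.univ ×ˢ Set.Ici 0) ∧
  ∀ T > (0:ℝ), ∃ C : ℝ, ∀ x : ℝ, ∀ t ∈ Set.Icc (0:ℝ) T,
    |u x t - psi α β x t| ≤ C ∧ |w x t| ≤ C

/-- A test function of class `C^{1,1}(ℝ × [0,T])`, vanishing for large `|x|` and at `t = T`,
together with its partial derivatives `φt`, `φx`. -/
def IsTestFun (T : ℝ) (φ φt φx : ℝ → ℝ → ℝ) : Prop :=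
  (∀ x : ℝ, ∀ t ∈ Set.Icc (0:ℝ) T,
    HasDerivWithinAt (fun s => φ x s) (φt x t) (Set.Icc 0 T) t) ∧
  (∀ x : ℝ, ∀ t ∈ Set.Icc (0:ℝ) T, HasDerivAt (fun y => φ y t) (φx x t) x) ∧
  ContinuousOn (fun q : ℝ × ℝ => φ q.1 q.2) (Set.univ ×ˢ Set.Icc 0 T) ∧
  ContinuousOn (fun q : ℝ × ℝ => φt q.1 q.2) (Set.univ ×ˢ Set.Icc 0 T) ∧
  ContinuousOn (fun q : ℝ × ℝ => φx q.1 q.2) (Set.univ ×ˢ Set.Icc 0 T) ∧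
  (∃ R : ℝ, ∀ x : ℝ, ∀ t ∈ Set.Icc (0:ℝ) T, R ≤ |x| → φ x t = 0) ∧
  (∀ x : ℝ, φ x T = 0)

/-- The weak form of the equation, relative to a given precipitation function `p` and
the spatial derivative `w` of `u - ψ`. -/
def WeakForm (α β : ℝ) (u p w : ℝ → ℝ → ℝ) : Prop :=
  ∀ T > (0:ℝ), ∀ φ φt φx : ℝ → ℝ → ℝ, IsTestFun T φ φt φx →
    (∫ t in Set.Ioc (0:ℝ) T, ∫ x : ℝ, φt x t * (u x t - psi α β x t))
      = ∫ t in Set.Ioc (0:ℝ) T, ∫ x : ℝ, (φx x t * w x t + p x t * u x t * φ x t)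

/-- A weak solution of the linear auxiliary problem with given precipitation function `p`. -/
def IsAuxSolution (α β : ℝ) (p u : ℝ → ℝ → ℝ) : Prop :=
  (∀ x t : ℝ, u (-x) t = u x t) ∧
  ∃ w : ℝ → ℝ → ℝ, AuxReg α β u w ∧ WeakForm α β u p w

/-- A weak solution `(u, p)` of the HHMO model. -/
def IsWeakSolution (α β ustar : ℝ) (u p : ℝ → ℝ → ℝ) : Prop :=
  (∀ x t : ℝ, u (-x) t = u x t) ∧
  (∀ x t : ℝ, p (-x) t = p x t) ∧
  Measurable (fun q : ℝ × ℝ => p q.1 q.2) ∧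
  (∀ x : ℝ, ∀ t ∈ Set.Ici (0:ℝ),
    (sSup ((fun s => u x s) '' Set.Icc 0 t) < ustar → p x t = 0) ∧
    (sSup ((fun s => u x s) '' Set.Icc 0 t) = ustar → p x t ∈ Set.Icc (0:ℝ) 1) ∧
    (ustar < sSup ((fun s => u x s) '' Set.Icc 0 t) → p x t = 1)) ∧
  (∀ x : ℝ, MonotoneOn (fun t => p x t) (Set.Ici (0:ℝ))) ∧
  ∃ w : ℝ → ℝ → ℝ, AuxReg α β u w ∧ WeakForm α β u p w

/-- Condition (P): the precipitation function depends only on `x` beyond the parabola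
`t = x²/α²`. -/
def CondP (α : ℝ) (p : ℝ → ℝ → ℝ) (pstar : ℝ → ℝ) : Prop :=
  Measurable pstar ∧
  ∀ᵐ x ∂(volume.restrict (Set.Ioi (0:ℝ))), ∀ t : ℝ, x ^ 2 / α ^ 2 < t → p x t = pstar x

/-- The admissible class `𝒜` of precipitation functions. -/
def IsAdmissible (p : ℝ → ℝ → ℝ) : Prop :=
  (∀ x t : ℝ, p (-x) t = p x t) ∧
  MeasureTheory.LocallyIntegrableOn (fun q : ℝ × ℝ => p q.1 q.2) (Set.Ioi 0 ×ˢ Set.Ici 0) ∧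
  ∀ T > (0:ℝ), ∃ R : ℝ, ∀ x ≥ R, ∀ t ∈ Set.Icc (0:ℝ) T, p x t = 0

/-- `u` converges uniformly, in parabolic similarity coordinates, to the profile `Φ`. -/
def ConvUnif (u : ℝ → ℝ → ℝ) (Φ : ℝ → ℝ) : Prop :=
  ∀ ε > (0:ℝ), ∃ T : ℝ, ∀ t ≥ T, ∀ η ≥ (0:ℝ), |u (η * Real.sqrt t) t - Φ η| < ε

/-- The error function. -/
def erf (x : ℝ) : ℝ := (2 / Real.sqrt Real.pi) * ∫ s in (0:ℝ)..x, Real.exp (-s ^ 2)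

/-- The complementary error function. -/
def erfc (x : ℝ) : ℝ := (2 / Real.sqrt Real.pi) * ∫ s in Set.Ioi x, Real.exp (-s ^ 2)

/-- Kummer's confluent hypergeometric function `M(a,b,z)` (real arguments). -/
def kummerM (a b z : ℝ) : ℝ :=
  ∑' n : ℕ, (Polynomial.eval a (ascPochhammer ℝ n) / Polynomial.eval b (ascPochhammer ℝ n))
    * z ^ n / (n.factorial : ℝ)

/-- `κ = (1 + √(4γ+1))/2`, the positive root of `κ(κ-1) = γ`. -/
def kappaOf (γ : ℝ) : ℝ := (1 + Real.sqrt (4 * γ + 1)) / 2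

/-- The value `u*_γ` determined by the derivative matching condition. -/
def ustarGamma (α β γ : ℝ) : ℝ :=
  (α * β / 2) *
    (kappaOf γ * kummerM (kappaOf γ / 2 + 1) (kappaOf γ + 1 / 2) (-α ^ 2 / 4) /
        (α * kummerM (kappaOf γ / 2) (kappaOf γ + 1 / 2) (-α ^ 2 / 4)) +
      Real.exp (-α ^ 2 / 4) / (Real.sqrt Real.pi * erfc (α / 2)))⁻¹

/-- The self-similar profile `Φ_γ`. -/
def Phi (α β γ η : ℝ) : ℝ :=
  if η < α then
    ustarGamma α β γ * η ^ kappaOf γ *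
      kummerM (kappaOf γ / 2) (kappaOf γ + 1 / 2) (-η ^ 2 / 4) /
      (α ^ kappaOf γ * kummerM (kappaOf γ / 2) (kappaOf γ + 1 / 2) (-α ^ 2 / 4))
  else ustarGamma α β γ * erfc (η / 2) / erfc (α / 2)

open Topology

theorem ascPochhammer_eval_eq_prod_range {S : Type*} [CommSemiring S] (a : S) (n : ℕ) :
    (ascPochhammer S n).eval a = ∏ i ∈ Finset.range n, (a + i) := by
  induction n with
  | zero => simp
  | succ n ih => rw [ascPochhammer_succ_eval, ih, Finset.prod_range_succ]

theorem kummerM_term_eq (a b z : ℝ) (n : ℕ) :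
    (ascPochhammer ℝ n).eval a / (ascPochhammer ℝ n).eval b * z ^ n / n.factorial =
      (∏ i ∈ Finset.range n, (a + i) / (b + i)) * z ^ n / n.factorial := by
  rw [ascPochhammer_eval_eq_prod_range, ascPochhammer_eval_eq_prod_range,
    Finset.prod_div_distrib]

theorem tendsto_linear_div_atTop (p a b : ℝ) :
    Tendsto (fun κ : ℝ => (p * κ + a) / (κ + b)) atTop (𝓝 p) := by
  have h : Tendsto (fun κ : ℝ => p + (a - p * b) / (κ + b)) atTop (𝓝 (p + 0)) :=
    tendsto_const_nhds.add
      (tendsto_const_nhds.div_atTop (tendsto_atTop_add_const_right _ b tendsto_id))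
  rw [add_zero] at h
  refine h.congr' ?_
  filter_upwards [eventually_gt_atTop (-b)] with κ hκ
  field_simp [show κ + b ≠ 0 by linarith]
  ring

theorem eventually_abs_linear_div_le_one {p : ℝ} (hp : |p| < 1) (a b : ℝ) :
    ∀ᶠ κ : ℝ in atTop, ∀ i : ℕ, |(p * κ + a + i) / (κ + b + i)| ≤ 1 := by
  filter_upwards [eventually_ge_atTop 0, eventually_gt_atTop (-b),
    eventually_ge_atTop ((|a| - b) / (1 - |p|))] with κ hκ₀ hκb hκ i
  have hden : 0 < κ + b + i := by linarith [i.cast_nonneg (α := ℝ)]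
  rw [abs_div, abs_of_pos hden, div_le_one hden]
  have hlin : |a| - b ≤ (1 - |p|) * κ := (div_le_iff₀' (by linarith)).mp hκ
  calc |p * κ + a + i| ≤ |p| * κ + |a| + i := by
        have := abs_add_three (p * κ) a i
        rwa [abs_mul, abs_of_nonneg hκ₀, Nat.abs_cast] at this
    _ ≤ κ + b + i := by linarith

/-- Termwise `(pκ + a)ₙ / (κ + b)ₙ → pⁿ`, and for large `κ` each factor
`(pκ + a + i) / (κ + b + i)` has modulus at most `1`, so the series is dominated by the
exponential series of `|z|`. -/
theorem tendsto_kummerM_atTop {p : ℝ} (hp : |p| < 1) (a b z : ℝ) :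
    Tendsto (fun κ : ℝ => kummerM (p * κ + a) (κ + b) z) atTop (𝓝 (Real.exp (p * z))) := by
  rw [Real.exp_eq_exp_ℝ, ← (NormedSpace.expSeries_div_hasSum_exp (p * z)).tsum_eq]
  simp only [kummerM, kummerM_term_eq]
  refine tendsto_tsum_of_dominated_convergence (Real.summable_pow_div_factorial |z|)
    (fun n => ?_) ?_
  · have hprod := tendsto_finsetProd (Finset.range n) fun i _ =>
      tendsto_linear_div_atTop p (a + i) (b + i)
    rw [Finset.prod_const, Finset.card_range] at hprod
    simpa only [mul_pow, add_assoc] using (hprod.mul_const (z ^ n)).div_const (n.factorial : ℝ)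
  · filter_upwards [eventually_abs_linear_div_le_one hp a b] with κ hκ n
    have hprod : |∏ i ∈ Finset.range n, (p * κ + a + i) / (κ + b + i)| ≤ 1 := by
      rw [Finset.abs_prod]
      exact Finset.prod_le_one (fun i _ => abs_nonneg _) fun i _ => hκ i
    rw [Real.norm_eq_abs, abs_div, abs_mul, abs_pow, Nat.abs_cast]
    gcongr
    exact mul_le_of_le_one_left (by positivity) hprod

theorem kummer_limits_general (α : ℝ) :
    Filter.Tendsto (fun κ : ℝ => kummerM (κ / 2 + 1) (κ + 1 / 2) (-α ^ 2 / 4))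
      Filter.atTop (nhds (Real.exp (-α ^ 2 / 8))) ∧
    Filter.Tendsto (fun κ : ℝ => kummerM (κ / 2) (κ + 1 / 2) (-α ^ 2 / 4))
      Filter.atTop (nhds (Real.exp (-α ^ 2 / 8))) := by
  have hhalf : |(1 / 2 : ℝ)| < 1 := by norm_num [abs_of_pos]
  rw [show -α ^ 2 / 8 = 1 / 2 * (-α ^ 2 / 4) by ring]
  constructor
  · simpa only [one_div_mul_eq_div] using tendsto_kummerM_atTop hhalf 1 (1 / 2) (-α ^ 2 / 4)
  · simpa only [one_div_mul_eq_div, add_zero] using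
      tendsto_kummerM_atTop hhalf 0 (1 / 2) (-α ^ 2 / 4)

/-- limits of Kummer's function as the real parameter `κ → ∞`. -/
theorem kummer_limits (α : ℝ) (hα : 0 < α) :
    Filter.Tendsto (fun κ : ℝ => kummerM (κ / 2 + 1) (κ + 1 / 2) (-α ^ 2 / 4))
      Filter.atTop (nhds (Real.exp (-α ^ 2 / 8))) ∧
    Filter.Tendsto (fun κ : ℝ => kummerM (κ / 2) (κ + 1 / 2) (-α ^ 2 / 4))
      Filter.atTop (nhds (Real.exp (-α ^ 2 / 8))) :=
  kummer_limits_general α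

end
end

section
/- Fix α > 0 and u* > 0, and for κ ≥ 1 define v(η, κ) = u*·η^κ·M(κ/2, κ+1/2, −η²/4)/(α^κ·M(κ/2, κ+1/2, −α²/4)) for η ∈ (0, α]. Then for any 1 ≤ κ₁ < κ₂: (a) v(η, κ₂) − v(η, κ₁) < 0 for all η ∈ (0, α); and (b) ∂_η v(α, κ₂) > ∂_η v(α, κ₁); in particular, κ ↦ ∂_η v(α, κ) is strictly increasing on [1, ∞). -/
open MeasureTheory Filter Set

noncomputable section

/-- The left-hand profile `v(η, κ)` normalized so that `v(α, κ) = u*`. -/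
def vProf (α ustar κ η : ℝ) : ℝ :=
  ustar * η ^ κ * kummerM (κ / 2) (κ + 1 / 2) (-η ^ 2 / 4) /
    (α ^ κ * kummerM (κ / 2) (κ + 1 / 2) (-α ^ 2 / 4))

/-!
Write `g_κ(η) = η^κ M(κ/2, κ+1/2, -η²/4)`, so that `v(·, κ) = u* g_κ / g_κ(α)`. Kummer's equation
for `M` turns into `g_κ'' + (η/2) g_κ' = κ(κ-1) g_κ / η²` on `(0, ∞)`, and `g_κ(0⁺) = 0`.
Multiplying by `exp (η²/4)` removes the first-order term, which gives two facts. A solution with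
`κ(κ-1) ≥ 0` that starts positive never reaches a zero. For `κ₁ < κ₂` the weighted Wronskian
`exp (η²/4) (g₁ g₂' - g₂ g₁')` is strictly increasing and vanishes at `0⁺`, so it is positive.
At `η = α` this is (b); and it makes `g₂ / g₁` strictly increasing, so
`g₂(η) / g₂(α) < g₁(η) / g₁(α)` for `η < α`, which is (a).
-/

open scoped Topology

section BoundedCoefficients

variable {r : ℕ → ℝ} {C : ℝ}

theorem summable_mul_pow_div_factorial (hr : ∀ n, |r n| ≤ C) (z : ℝ) :
    Summable fun n => r n * z ^ n / n.factorial :=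
  .of_norm_bounded ((Real.summable_pow_div_factorial |z|).mul_left C) fun n => by
    rw [Real.norm_eq_abs, mul_div_assoc, abs_mul, abs_div, abs_pow, Nat.abs_cast]
    exact mul_le_mul_of_nonneg_right (hr n) (by positivity)

theorem hasDerivAt_tsum_mul_pow_div_factorial (hr : ∀ n, |r n| ≤ C) (z : ℝ) :
    HasDerivAt (fun z => ∑' n, r n * z ^ n / n.factorial)
      (∑' n, r (n + 1) * z ^ n / n.factorial) z := by
  set R := |z| + 1
  have hterm (n : ℕ) (y : ℝ) :
      HasDerivAt (fun y => r (n + 1) * y ^ (n + 1) / (n + 1).factorial)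
        (r (n + 1) * y ^ n / n.factorial) y := by
    refine (((hasDerivAt_pow (n + 1) y).const_mul (r (n + 1))).div_const _).congr_deriv ?_
    rw [Nat.factorial_succ]
    push_cast
    field_simp
  have hbound (n : ℕ) (y : ℝ) (hy : y ∈ Ioo (-R) R) :
      ‖r (n + 1) * y ^ n / (n.factorial : ℝ)‖ ≤ C * (R ^ n / n.factorial) := by
    rw [Real.norm_eq_abs, mul_div_assoc, abs_mul, abs_div, abs_pow, Nat.abs_cast]
    gcongr
    · exact (abs_nonneg _).trans (hr 0)
    · exact hr _
    · exact (abs_lt.2 hy).le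
  have hz : z ∈ Ioo (-R) R := abs_lt.1 (by simp [R])
  have hshift := hasDerivAt_tsum_of_isPreconnected ((Real.summable_pow_div_factorial R).mul_left C)
    isOpen_Ioo isPreconnected_Ioo (fun n y _ => hterm n y) hbound hz
    ((summable_nat_add_iff 1).2 (summable_mul_pow_div_factorial hr z)) hz
  refine (hshift.const_add (r 0)).congr_of_eventuallyEq (Eventually.of_forall fun y => ?_)
  simp only [(summable_mul_pow_div_factorial hr y).tsum_eq_zero_add, pow_zero, Nat.factorial_zero,
    Nat.cast_one, mul_one, div_one]

theorem hasSum_nat_mul_pow_div_factorial (hr : ∀ n, |r n| ≤ C) (z : ℝ) :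
    HasSum (fun n : ℕ => (n : ℝ) * r n * z ^ n / n.factorial)
      (z * ∑' n, r (n + 1) * z ^ n / n.factorial) := by
  have hsucc : HasSum (fun n => ((n + 1 : ℕ) : ℝ) * r (n + 1) * z ^ (n + 1) / (n + 1).factorial)
      (z * ∑' n, r (n + 1) * z ^ n / n.factorial) := by
    refine ((summable_mul_pow_div_factorial (fun n => hr (n + 1)) z).hasSum.mul_left z).congr_fun
      fun n => ?_
    rw [Nat.factorial_succ]
    push_cast
    field_simp
    ring
  simpa using HasSum.zero_add (f := fun n : ℕ => (n : ℝ) * r n * z ^ n / n.factorial) hsucc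

end BoundedCoefficients

section Kummer

def kummerCoeff (a b : ℝ) (n : ℕ) : ℝ :=
  (ascPochhammer ℝ n).eval a / (ascPochhammer ℝ n).eval b

variable {a b : ℝ}

theorem kummerM_eq_tsum (a b z : ℝ) :
    kummerM a b z = ∑' n, kummerCoeff a b n * z ^ n / n.factorial :=
  rfl

theorem ascPochhammer_eval_le_eval (ha : 0 < a) (hab : a ≤ b) (n : ℕ) :
    (ascPochhammer ℝ n).eval a ≤ (ascPochhammer ℝ n).eval b := by
  induction n with
  | zero => simp
  | succ n ih =>
    rw [ascPochhammer_succ_eval, ascPochhammer_succ_eval]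
    exact mul_le_mul ih (by linarith) (by positivity) (ascPochhammer_pos n b (ha.trans_le hab)).le

theorem abs_kummerCoeff_le_one (ha : 0 < a) (hab : a ≤ b) (n : ℕ) : |kummerCoeff a b n| ≤ 1 := by
  have hb := ascPochhammer_pos n b (ha.trans_le hab)
  rw [kummerCoeff, abs_of_pos (div_pos (ascPochhammer_pos n a ha) hb)]
  exact div_le_one_of_le₀ (ascPochhammer_eval_le_eval ha hab n) hb.le

theorem kummerCoeff_succ (a b : ℝ) (n : ℕ) :
    kummerCoeff a b (n + 1) = a / b * kummerCoeff (a + 1) (b + 1) n := by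
  simp only [kummerCoeff, ascPochhammer_succ_left, Polynomial.eval_mul, Polynomial.eval_X,
    Polynomial.eval_comp, Polynomial.eval_add, Polynomial.eval_one, mul_div_mul_comm]

theorem add_mul_kummerCoeff_succ (hb : 0 < b) (n : ℕ) :
    (b + n) * kummerCoeff a b (n + 1) = (a + n) * kummerCoeff a b n := by
  have := (ascPochhammer_pos n b hb).ne'
  have : b + n ≠ 0 := by positivity
  simp only [kummerCoeff, ascPochhammer_succ_eval]
  field_simp

theorem div_mul_kummerM_succ (a b z : ℝ) :
    a / b * kummerM (a + 1) (b + 1) z = ∑' n, kummerCoeff a b (n + 1) * z ^ n / n.factorial := by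
  rw [kummerM_eq_tsum, ← tsum_mul_left]
  simp only [kummerCoeff_succ, mul_div_assoc, mul_assoc]

theorem hasDerivAt_kummerM (ha : 0 < a) (hab : a ≤ b) (z : ℝ) :
    HasDerivAt (kummerM a b) (a / b * kummerM (a + 1) (b + 1) z) z := by
  rw [div_mul_kummerM_succ]
  exact hasDerivAt_tsum_mul_pow_div_factorial (abs_kummerCoeff_le_one ha hab) z

theorem kummerM_ode (ha : 0 < a) (hab : a ≤ b) (z : ℝ) :
    z * (a / b * ((a + 1) / (b + 1) * kummerM (a + 2) (b + 2) z))
      + (b - z) * (a / b * kummerM (a + 1) (b + 1) z) - a * kummerM a b z = 0 := by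
  have hc := abs_kummerCoeff_le_one ha hab
  have h2 : a / b * ((a + 1) / (b + 1) * kummerM (a + 2) (b + 2) z)
      = ∑' n, kummerCoeff a b (n + 2) * z ^ n / n.factorial := by
    rw [show a + 2 = a + 1 + 1 by ring, show b + 2 = b + 1 + 1 by ring, div_mul_kummerM_succ,
      ← tsum_mul_left]
    simp only [kummerCoeff_succ a b, mul_div_assoc, mul_assoc]
  rw [h2, div_mul_kummerM_succ, kummerM_eq_tsum]
  have hsum := ((hasSum_nat_mul_pow_div_factorial (fun n => hc (n + 1)) z).add
      ((summable_mul_pow_div_factorial (fun n => hc (n + 1)) z).hasSum.mul_left b)).sub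
    ((hasSum_nat_mul_pow_div_factorial hc z).add
      ((summable_mul_pow_div_factorial hc z).hasSum.mul_left a))
  have hzero := hsum.unique (hasSum_zero.congr_fun fun n => ?_)
  · linear_combination hzero
  · have := add_mul_kummerCoeff_succ (a := a) (ha.trans_le hab) n
    field_simp
    linear_combination (z ^ n) * this

theorem kummerM_zero (a b : ℝ) : kummerM a b 0 = 1 := by
  rw [kummerM_eq_tsum, tsum_eq_single 0 fun n hn => by simp [zero_pow hn]]
  simp [kummerCoeff]

theorem continuous_kummerM {a b : ℝ} (ha : 0 < a) (hab : a ≤ b) : Continuous (kummerM a b) :=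
  continuous_iff_continuousAt.2 fun z => (hasDerivAt_kummerM ha hab z).continuousAt

theorem HasDerivAt.kummerM {f : ℝ → ℝ} {f' x a b : ℝ} (hf : HasDerivAt f f' x) (ha : 0 < a)
    (hab : a ≤ b) :
    HasDerivAt (fun x => kummerM a b (f x)) (a / b * kummerM (a + 1) (b + 1) (f x) * f') x :=
  (hasDerivAt_kummerM ha hab (f x)).comp x hf

end Kummer

/-- `(φ, ψ)` solves `φ'' + (η/2) φ' - (γ/η²) φ = 0` on `(0, ∞)` as a first-order system. -/
def SolvesProfileODE (γ : ℝ) (φ ψ : ℝ → ℝ) : Prop :=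
  ∀ η > 0, HasDerivAt φ (ψ η) η ∧ HasDerivAt ψ (-(η / 2) * ψ η + γ / η ^ 2 * φ η) η

theorem hasDerivAt_exp_sq_div_four_mul {f : ℝ → ℝ} {g η : ℝ}
    (hf : HasDerivAt f (-(η / 2) * f η + g) η) :
    HasDerivAt (fun x => Real.exp (x ^ 2 / 4) * f x) (Real.exp (η ^ 2 / 4) * g) η := by
  have hq : HasDerivAt (fun x : ℝ => x ^ 2 / 4) (η / 2) η :=
    ((hasDerivAt_pow 2 η).div_const 4).congr_deriv (by ring)
  exact (hq.exp.mul hf).congr_deriv (by ring)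

namespace SolvesProfileODE

variable {γ : ℝ} {φ ψ : ℝ → ℝ}

theorem continuousOn (h : SolvesProfileODE γ φ ψ) : ContinuousOn φ (Ioi 0) :=
  fun η hη => (h η hη).1.continuousAt.continuousWithinAt

/-- If `φ z ≤ 0`, the mean value theorem gives `φ' < 0` somewhere in `(z/2, z)`. Since
`(exp (η²/4) φ')' = exp (η²/4) γ φ / η² ≥ 0` on `(0, z)`, then `φ' < 0` on a whole initial interval,
and `φ` cannot rise from `φ(0⁺) = 0` to positive values there. -/
theorem pos_of_forall_Ioo (h : SolvesProfileODE γ φ ψ) (hγ : 0 ≤ γ)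
    (h0 : Tendsto φ (𝓝[>] 0) (𝓝 0)) {z : ℝ} (hz : 0 < z) (hpos : ∀ η ∈ Ioo 0 z, 0 < φ η) :
    0 < φ z := by
  by_contra! hφz
  obtain ⟨ξ, hξ, hψξ⟩ := exists_hasDerivAt_eq_slope φ ψ (half_lt_self hz)
    (h.continuousOn.mono fun x hx => (half_pos hz).trans_le hx.1)
    fun x hx => (h x ((half_pos hz).trans hx.1)).1
  have hξ0 : 0 < ξ := (half_pos hz).trans hξ.1
  have hψξ_neg : ψ ξ < 0 := by
    rw [hψξ]
    exact div_neg_of_neg_of_pos (by linarith [hpos (z / 2) ⟨half_pos hz, half_lt_self hz⟩])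
      (by linarith)
  have hE : MonotoneOn (fun x => Real.exp (x ^ 2 / 4) * ψ x) (Ioc 0 ξ) := by
    refine monotoneOn_of_hasDerivWithinAt_nonneg (convex_Ioc 0 ξ)
      (f' := fun x => Real.exp (x ^ 2 / 4) * (γ / x ^ 2 * φ x)) ?_ ?_ ?_
    · exact fun x hx =>
        (hasDerivAt_exp_sq_div_four_mul (h x hx.1).2).continuousAt.continuousWithinAt
    · rw [interior_Ioc]
      exact fun x hx => (hasDerivAt_exp_sq_div_four_mul (h x hx.1).2).hasDerivWithinAt
    · rw [interior_Ioc]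
      intro x hx
      have := hpos x ⟨hx.1, hx.2.trans hξ.2⟩
      positivity
  have hψ_neg : ∀ x ∈ Ioc 0 ξ, ψ x < 0 := fun x hx => by
    have := hE hx ⟨hξ0, le_rfl⟩ hx.2
    nlinarith [Real.exp_pos (x ^ 2 / 4), Real.exp_pos (ξ ^ 2 / 4)]
  have hφ_anti : AntitoneOn φ (Ioc 0 ξ) := by
    refine antitoneOn_of_hasDerivWithinAt_nonpos (convex_Ioc 0 ξ) (f' := ψ)
      (h.continuousOn.mono fun x hx => hx.1) ?_ ?_ <;> rw [interior_Ioc]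
    · exact fun x hx => (h x hx.1).1.hasDerivWithinAt
    · exact fun x hx => (hψ_neg x (Ioo_subset_Ioc_self hx)).le
  have hφξ : φ ξ ≤ 0 := ge_of_tendsto h0 <| by
    filter_upwards [Ioo_mem_nhdsGT hξ0] with x hx
    exact hφ_anti ⟨hx.1, hx.2.le⟩ ⟨hξ0, le_rfl⟩ hx.2.le
  exact (hpos ξ ⟨hξ0, hξ.2⟩).not_ge hφξ

theorem pos (h : SolvesProfileODE γ φ ψ) (hγ : 0 ≤ γ) (h0 : Tendsto φ (𝓝[>] 0) (𝓝 0))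
    (hnear : ∀ᶠ η in 𝓝[>] 0, 0 < φ η) {z : ℝ} (hz : 0 < z) : 0 < φ z := by
  by_contra! hφz
  obtain ⟨ε, hε, hεpos⟩ := mem_nhdsGT_iff_exists_Ioo_subset.1 hnear
  have hεz : ε ≤ z := not_lt.1 fun hzε => (hεpos ⟨hz, hzε⟩ : 0 < φ z).not_ge hφz
  have hS : IsCompact (Icc ε z ∩ φ ⁻¹' Iic 0) :=
    isCompact_Icc.of_isClosed_subset ((h.continuousOn.mono fun x hx =>
      (mem_Ioi.1 hε).trans_le hx.1).preimage_isClosed_of_isClosed isClosed_Icc isClosed_Iic)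
      inter_subset_left
  obtain ⟨z₀, ⟨hz₀, hφz₀⟩, hleast⟩ := hS.exists_isLeast ⟨z, ⟨hεz, le_rfl⟩, hφz⟩
  have hz₀pos : 0 < z₀ := (mem_Ioi.1 hε).trans_le hz₀.1
  refine (h.pos_of_forall_Ioo hγ h0 hz₀pos fun η hη => ?_).not_ge hφz₀
  by_contra! hφη
  rcases lt_or_ge η ε with hηε | hεη
  · exact (hεpos ⟨hη.1, hηε⟩ : 0 < φ η).not_ge hφη
  · exact hη.2.not_ge (hleast ⟨⟨hεη, hη.2.le.trans hz₀.2⟩, hφη⟩)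

end SolvesProfileODE

section Wronskian

variable {γ₁ γ₂ : ℝ} {φ₁ ψ₁ φ₂ ψ₂ : ℝ → ℝ}

/-- `exp (η²/4)` times the Wronskian has derivative `exp (η²/4) (γ₂ - γ₁) φ₁ φ₂ / η² > 0`
and vanishes at `0⁺`. -/
theorem SolvesProfileODE.wronskian_pos (h₁ : SolvesProfileODE γ₁ φ₁ ψ₁)
    (h₂ : SolvesProfileODE γ₂ φ₂ ψ₂) (hγ : γ₁ < γ₂) (hφ₁ : ∀ η > 0, 0 < φ₁ η)
    (hφ₂ : ∀ η > 0, 0 < φ₂ η)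
    (hW : Tendsto (fun η => φ₁ η * ψ₂ η - φ₂ η * ψ₁ η) (𝓝[>] 0) (𝓝 0)) {η : ℝ} (hη : 0 < η) :
    0 < φ₁ η * ψ₂ η - φ₂ η * ψ₁ η := by
  set E := fun x => Real.exp (x ^ 2 / 4) * (φ₁ x * ψ₂ x - φ₂ x * ψ₁ x)
  have hE (x : ℝ) (hx : 0 < x) :
      HasDerivAt E (Real.exp (x ^ 2 / 4) * ((γ₂ - γ₁) / x ^ 2 * (φ₁ x * φ₂ x))) x := by
    refine hasDerivAt_exp_sq_div_four_mul ((((h₁ x hx).1.mul (h₂ x hx).2).sub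
      ((h₂ x hx).1.mul (h₁ x hx).2)).congr_deriv ?_)
    ring
  have hE_mono : StrictMonoOn E (Ioi 0) := by
    refine strictMonoOn_of_hasDerivWithinAt_pos (convex_Ioi 0)
      (f' := fun x => Real.exp (x ^ 2 / 4) * ((γ₂ - γ₁) / x ^ 2 * (φ₁ x * φ₂ x)))
      (fun x hx => (hE x hx).continuousAt.continuousWithinAt) ?_ ?_ <;> rw [interior_Ioi]
    · exact fun x hx => (hE x hx).hasDerivWithinAt
    · intro x hx
      have := hφ₁ x hx
      have := hφ₂ x hx
      have := sub_pos.2 hγ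
      have := pow_pos (mem_Ioi.1 hx) 2
      positivity
  have hE0 : Tendsto E (𝓝[>] 0) (𝓝 0) := by
    have hexp : Tendsto (fun x : ℝ => Real.exp (x ^ 2 / 4)) (𝓝[>] 0) (𝓝 1) := by
      simpa using
        (((continuous_pow 2).div_const 4).rexp.continuousWithinAt (x := 0) (s := Ioi 0)).tendsto
    simpa using hexp.mul hW
  have hEη : 0 < E η := by
    refine lt_of_le_of_lt (le_of_tendsto hE0 ?_) (hE_mono (half_pos hη) hη (half_lt_self hη))
    filter_upwards [Ioo_mem_nhdsGT (half_pos hη)] with x hx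
    exact (hE_mono hx.1 (half_pos hη) hx.2).le
  exact pos_of_mul_pos_right hEη (Real.exp_pos _).le

theorem SolvesProfileODE.strictMonoOn_div (h₁ : SolvesProfileODE γ₁ φ₁ ψ₁)
    (h₂ : SolvesProfileODE γ₂ φ₂ ψ₂) (hφ₁ : ∀ η > 0, 0 < φ₁ η)
    (hW : ∀ η > 0, 0 < φ₁ η * ψ₂ η - φ₂ η * ψ₁ η) :
    StrictMonoOn (fun η => φ₂ η / φ₁ η) (Ioi 0) := by
  have hdiv (x : ℝ) (hx : 0 < x) := (h₂ x hx).1.div (h₁ x hx).1 (hφ₁ x hx).ne'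
  refine strictMonoOn_of_hasDerivWithinAt_pos (convex_Ioi 0)
    (f' := fun x => (ψ₂ x * φ₁ x - φ₂ x * ψ₁ x) / φ₁ x ^ 2)
    (fun x hx => (hdiv x hx).continuousAt.continuousWithinAt) ?_ ?_ <;> rw [interior_Ioi]
  · exact fun x hx => (hdiv x hx).hasDerivWithinAt
  · intro x hx
    have := hW x hx
    have := hφ₁ x hx
    rw [show ψ₂ x * φ₁ x - φ₂ x * ψ₁ x = φ₁ x * ψ₂ x - φ₂ x * ψ₁ x by ring]
    positivity

end Wronskian

section KummerProfile

def kummerProfile (κ η : ℝ) : ℝ :=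
  η ^ κ * kummerM (κ / 2) (κ + 1 / 2) (-η ^ 2 / 4)

def kummerProfileDeriv (κ η : ℝ) : ℝ :=
  κ * η ^ (κ - 1) * kummerM (κ / 2) (κ + 1 / 2) (-η ^ 2 / 4) -
    η ^ κ * (η / 2) * (κ / 2 / (κ + 1 / 2) * kummerM (κ / 2 + 1) (κ + 1 / 2 + 1) (-η ^ 2 / 4))

variable {κ : ℝ}

theorem kummerProfile_solvesProfileODE (hκ : 0 < κ) :
    SolvesProfileODE (κ * (κ - 1)) (kummerProfile κ) (kummerProfileDeriv κ) := by
  intro η hη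
  have ha : 0 < κ / 2 := by positivity
  have hab : κ / 2 ≤ κ + 1 / 2 := by linarith
  have hz : HasDerivAt (fun η : ℝ => -η ^ 2 / 4) (-(η / 2)) η := by
    refine ((hasDerivAt_pow 2 η).neg.div_const 4).congr_deriv ?_
    ring
  have hpow (p : ℝ) : HasDerivAt (fun η : ℝ => η ^ p) (p * η ^ (p - 1)) η :=
    Real.hasDerivAt_rpow_const (Or.inl hη.ne')
  have hhalf : HasDerivAt (fun η : ℝ => η / 2) (1 / 2) η := (hasDerivAt_id η).div_const 2
  have hF := hz.kummerM ha hab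
  have hF1 := hz.kummerM (by linarith : 0 < κ / 2 + 1) (by linarith : κ / 2 + 1 ≤ κ + 1 / 2 + 1)
  have hq : η ^ (κ - 1) = η ^ κ / η := by rw [Real.rpow_sub hη, Real.rpow_one]
  have hr : η ^ (κ - 1 - 1) = η ^ κ / η ^ 2 := by
    rw [Real.rpow_sub hη, hq, Real.rpow_one]; ring
  constructor
  · exact ((hpow κ).mul hF).congr_deriv (by unfold kummerProfileDeriv; ring)
  · refine ((((hpow (κ - 1)).const_mul κ).mul hF).sub
      (((hpow κ).mul hhalf).mul (hF1.const_mul _))).congr_deriv ?_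
    have hode := kummerM_ode ha hab (-η ^ 2 / 4)
    rw [show κ / 2 + 1 + 1 = κ / 2 + 2 by ring, show κ + 1 / 2 + 1 + 1 = κ + 1 / 2 + 2 by ring]
    simp only [kummerProfileDeriv, kummerProfile, Pi.mul_apply, hq, hr]
    generalize kummerM (κ / 2) (κ + 1 / 2) (-η ^ 2 / 4) = F at hode ⊢
    generalize kummerM (κ / 2 + 1) (κ + 1 / 2 + 1) (-η ^ 2 / 4) = F₁ at hode ⊢
    generalize kummerM (κ / 2 + 2) (κ + 1 / 2 + 2) (-η ^ 2 / 4) = F₂ at hode ⊢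
    linear_combination (norm := (field_simp; ring)) (-η ^ κ) * hode

theorem continuous_kummerProfile (hκ : 0 < κ) : Continuous (kummerProfile κ) :=
  (Real.continuous_rpow_const hκ.le).mul
    ((continuous_kummerM (by positivity) (by linarith)).comp (by fun_prop))

theorem continuous_kummerProfileDeriv (hκ : 1 ≤ κ) : Continuous (kummerProfileDeriv κ) := by
  have hM := continuous_kummerM (a := κ / 2) (b := κ + 1 / 2) (by positivity) (by linarith)
  have hM₁ :=
    continuous_kummerM (a := κ / 2 + 1) (b := κ + 1 / 2 + 1) (by positivity) (by linarith)
  have hp := Real.continuous_rpow_const (q := κ - 1) (by linarith)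
  have hp' := Real.continuous_rpow_const (q := κ) (by linarith)
  unfold kummerProfileDeriv
  fun_prop

theorem kummerProfile_zero (hκ : 0 < κ) : kummerProfile κ 0 = 0 := by
  simp [kummerProfile, Real.zero_rpow hκ.ne']

theorem tendsto_kummerProfile_nhdsGT_zero (hκ : 0 < κ) :
    Tendsto (kummerProfile κ) (𝓝[>] 0) (𝓝 0) := by
  simpa [kummerProfile_zero hκ] using
    ((continuous_kummerProfile hκ).continuousWithinAt (x := 0) (s := Ioi 0)).tendsto

theorem kummerProfile_pos (hκ : 1 ≤ κ) {η : ℝ} (hη : 0 < η) : 0 < kummerProfile κ η := by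
  have hM : ∀ᶠ x in 𝓝 (0 : ℝ), 0 < kummerM (κ / 2) (κ + 1 / 2) (-x ^ 2 / 4) := by
    refine ((continuous_kummerM (by positivity) (by linarith)).comp
      (by fun_prop : Continuous fun x : ℝ => -x ^ 2 / 4)).continuousAt.eventually
        (lt_mem_nhds ?_)
    simp [kummerM_zero]
  refine (kummerProfile_solvesProfileODE (by linarith)).pos (by nlinarith)
    (tendsto_kummerProfile_nhdsGT_zero (by linarith)) ?_ hη
  filter_upwards [self_mem_nhdsWithin, nhdsWithin_le_nhds hM] with x hx hMx
  exact mul_pos (Real.rpow_pos_of_pos hx κ) hMx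

theorem kummerProfile_wronskian_pos {κ₁ κ₂ : ℝ} (hκ₁ : 1 ≤ κ₁) (hκ : κ₁ < κ₂) {η : ℝ}
    (hη : 0 < η) :
    0 < kummerProfile κ₁ η * kummerProfileDeriv κ₂ η
      - kummerProfile κ₂ η * kummerProfileDeriv κ₁ η := by
  have hκ₂ : 1 ≤ κ₂ := hκ₁.trans hκ.le
  refine (kummerProfile_solvesProfileODE (by linarith)).wronskian_pos
    (kummerProfile_solvesProfileODE (by linarith)) (by nlinarith)
    (fun x hx => kummerProfile_pos hκ₁ hx) (fun x hx => kummerProfile_pos hκ₂ hx) ?_ hη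
  have hW : Continuous fun x =>
      kummerProfile κ₁ x * kummerProfileDeriv κ₂ x - kummerProfile κ₂ x * kummerProfileDeriv κ₁ x :=
    ((continuous_kummerProfile (by linarith)).mul (continuous_kummerProfileDeriv hκ₂)).sub
      ((continuous_kummerProfile (by linarith)).mul (continuous_kummerProfileDeriv hκ₁))
  simpa [kummerProfile_zero (by linarith : 0 < κ₁), kummerProfile_zero (by linarith : 0 < κ₂)]
    using (hW.continuousWithinAt (x := 0) (s := Ioi 0)).tendsto

end KummerProfile

section VProf

variable {α ustar κ : ℝ}

theorem vProf_eq_div :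
    vProf α ustar κ = fun η => ustar * kummerProfile κ η / kummerProfile κ α := by
  ext η
  simp only [vProf, kummerProfile, mul_assoc]

theorem deriv_vProf (hα : 0 < α) (hκ : 0 < κ) :
    deriv (vProf α ustar κ) α = ustar * kummerProfileDeriv κ α / kummerProfile κ α := by
  rw [vProf_eq_div]
  exact ((((kummerProfile_solvesProfileODE hκ) α hα).1.const_mul ustar).div_const _).deriv

theorem vProf_lt_vProf {κ₁ κ₂ : ℝ} (hα : 0 < α) (hu : 0 < ustar) (hκ₁ : 1 ≤ κ₁) (hκ : κ₁ < κ₂)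
    {η : ℝ} (hη : η ∈ Ioo 0 α) : vProf α ustar κ₂ η < vProf α ustar κ₁ η := by
  have hκ₂ : 1 ≤ κ₂ := hκ₁.trans hκ.le
  have hratio := (kummerProfile_solvesProfileODE (by linarith : 0 < κ₁)).strictMonoOn_div
    (kummerProfile_solvesProfileODE (by linarith : 0 < κ₂)) (fun x hx => kummerProfile_pos hκ₁ hx)
    (fun x hx => kummerProfile_wronskian_pos hκ₁ hκ hx) hη.1 hα hη.2
  have hg₁η := kummerProfile_pos hκ₁ hη.1
  have hg₂η := kummerProfile_pos hκ₂ hη.1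
  have hg₁α := kummerProfile_pos hκ₁ hα
  have hg₂α := kummerProfile_pos hκ₂ hα
  rw [div_lt_div_iff₀ hg₁η hg₁α] at hratio
  rw [vProf_eq_div, vProf_eq_div, div_lt_div_iff₀ hg₂α hg₁α]
  nlinarith

theorem deriv_vProf_lt_deriv_vProf {κ₁ κ₂ : ℝ} (hα : 0 < α) (hu : 0 < ustar) (hκ₁ : 1 ≤ κ₁)
    (hκ : κ₁ < κ₂) : deriv (vProf α ustar κ₁) α < deriv (vProf α ustar κ₂) α := by
  have hκ₂ : 1 ≤ κ₂ := hκ₁.trans hκ.le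
  have hW := kummerProfile_wronskian_pos hκ₁ hκ hα
  rw [deriv_vProf hα (by linarith), deriv_vProf hα (by linarith),
    div_lt_div_iff₀ (kummerProfile_pos hκ₁ hα) (kummerProfile_pos hκ₂ hα)]
  nlinarith

end VProf

/-- monotonicity of the left-hand profile family in `κ`: for
`1 ≤ κ₁ < κ₂` the difference `v(·,κ₂) − v(·,κ₁)` is negative on `(0,α)`, and
`∂_η v(α, κ)` is strictly increasing in `κ` on `[1, ∞)`. -/
theorem vProf_monotonicity (α ustar : ℝ) (hα : 0 < α) (hu : 0 < ustar) :
    (∀ κ₁ κ₂ : ℝ, 1 ≤ κ₁ → κ₁ < κ₂ →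
      (∀ η ∈ Set.Ioo (0:ℝ) α, vProf α ustar κ₂ η - vProf α ustar κ₁ η < 0) ∧
      deriv (vProf α ustar κ₁) α < deriv (vProf α ustar κ₂) α) ∧
    StrictMonoOn (fun κ : ℝ => deriv (vProf α ustar κ) α) (Set.Ici 1) :=
  ⟨fun _ _ hκ₁ hκ => ⟨fun _ hη => sub_neg.2 (vProf_lt_vProf hα hu hκ₁ hκ hη),
      deriv_vProf_lt_deriv_vProf hα hu hκ₁ hκ⟩,
    fun _ hκ₁ _ _ hκ => deriv_vProf_lt_deriv_vProf hα hu hκ₁ hκ⟩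
end
end

section
/- Let p* : (0,∞) → [0,∞) be measurable with ∫₀ˣ ξ²·p*(ξ) dξ < ∞ for every x > 0, and let γ ≥ 0. If lim_{x→∞} (1/x)·∫₀ˣ ξ²·p*(ξ) dξ = γ, then p* is integrable on [1,∞) and lim_{x→∞} x·∫_x^∞ p*(ξ) dξ = γ. -/
open MeasureTheory Filter Set Real Topology
open scoped ENNReal

/-!
Write `H x = ∫₀ˣ ξ² p*(ξ) dξ`. Since `ξ⁻² = ∫_ξ^∞ 2 t⁻³ dt`, Tonelli's theorem gives
`∫_x^∞ p* = ∫_x^∞ 2 t⁻³ (H t - H x) dt` (finiteness included), hence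
`x ∫_x^∞ p* = 2 x ∫_x^∞ t⁻² (H t / t) dt - H x / x`.
The first term averages `H t / t` over `t ≥ x` against the probability density `x t⁻²`,
so it tends to `2γ`, while the second tends to `γ`.
-/

lemma lintegral_Ioi_two_mul_rpow_neg_three {ξ : ℝ} (hξ : 0 < ξ) :
    ∫⁻ t in Ioi ξ, ENNReal.ofReal (2 * t ^ (-3 : ℝ)) = ENNReal.ofReal (ξ ^ (-2 : ℝ)) := by
  rw [← ofReal_integral_eq_lintegral_ofReal
    ((integrableOn_Ioi_rpow_of_lt (by norm_num) hξ).const_mul 2)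
    ((ae_restrict_mem measurableSet_Ioi).mono fun t ht =>
      mul_nonneg zero_le_two (rpow_nonneg (hξ.trans ht).le _)),
    integral_const_mul, integral_Ioi_rpow_of_lt (by norm_num) hξ]
  congr 1
  norm_num
  ring

lemma integral_Ioi_rpow_neg_two {x : ℝ} (hx : 0 < x) : ∫ t in Ioi x, t ^ (-2 : ℝ) = x⁻¹ := by
  rw [integral_Ioi_rpow_of_lt (by norm_num) hx]
  norm_num [rpow_neg_one]

lemma lintegral_Ioi_eq_lintegral_Ioi_mul_lintegral_Ioc {x : ℝ} (hx : 0 ≤ x) {g : ℝ → ℝ≥0∞}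
    (hg : Measurable g) :
    ∫⁻ ξ in Ioi x, g ξ =
      ∫⁻ t in Ioi x, ENNReal.ofReal (2 * t ^ (-3 : ℝ)) *
        ∫⁻ ξ in Ioc x t, ENNReal.ofReal (ξ ^ 2) * g ξ := by
  set w : ℝ → ℝ≥0∞ := fun t => ENNReal.ofReal (2 * t ^ (-3 : ℝ))
  -- `ξ ≤ t` rather than `ξ < t`, so that the sections in `ξ` are the intervals `Ioc x t`.
  set k : ℝ → ℝ → ℝ≥0∞ := fun ξ t => {q : ℝ × ℝ | q.1 ≤ q.2}.indicator
    (fun q => w q.2 * (ENNReal.ofReal (q.1 ^ 2) * g q.1)) (ξ, t)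
  have hk : Measurable (Function.uncurry k) :=
    (Measurable.mul (by fun_prop)
      ((by fun_prop : Measurable fun q : ℝ × ℝ => ENNReal.ofReal (q.1 ^ 2)).mul
        (hg.comp measurable_fst))).indicator (measurableSet_le measurable_fst measurable_snd)
  calc ∫⁻ ξ in Ioi x, g ξ = ∫⁻ ξ in Ioi x, ∫⁻ t in Ioi x, k ξ t := by
        refine setLIntegral_congr_fun measurableSet_Ioi fun ξ hξ => ?_
        have hξ0 : 0 < ξ := hx.trans_lt hξ
        have hk_ξ : ∀ t,
            k ξ t = (Ici ξ).indicator (fun t => w t * (ENNReal.ofReal (ξ ^ 2) * g ξ)) t :=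
          fun t => by simp [k, indicator_apply]
        simp only [hk_ξ]
        rw [lintegral_indicator measurableSet_Ici, Measure.restrict_restrict measurableSet_Ici,
          inter_eq_left.mpr (Ici_subset_Ioi.mpr hξ), setLIntegral_congr Ioi_ae_eq_Ici.symm,
          lintegral_mul_const _ (by fun_prop), lintegral_Ioi_two_mul_rpow_neg_three hξ0,
          ← mul_assoc, ← ENNReal.ofReal_mul (by positivity), ← rpow_natCast, ← rpow_add hξ0]
        norm_num
    _ = ∫⁻ t in Ioi x, ∫⁻ ξ in Ioi x, k ξ t := lintegral_lintegral_swap hk.aemeasurable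
    _ = _ := by
        refine setLIntegral_congr_fun measurableSet_Ioi fun t ht => ?_
        have hk_t : ∀ ξ,
            k ξ t = (Iic t).indicator (fun ξ => w t * (ENNReal.ofReal (ξ ^ 2) * g ξ)) ξ :=
          fun ξ => by simp [k, indicator_apply]
        simp only [hk_t]
        rw [lintegral_indicator measurableSet_Iic, Measure.restrict_restrict measurableSet_Iic,
          Iic_inter_Ioi, lintegral_const_mul' _ _ ENNReal.ofReal_ne_top]

lemma integrable_and_integral_eq_of_lintegral_ofReal_eq {α : Type*} [MeasurableSpace α]
    {μ : Measure α} {f g : α → ℝ} (hf₀ : 0 ≤ᵐ[μ] f) (hf : AEStronglyMeasurable f μ)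
    (hg₀ : 0 ≤ᵐ[μ] g) (hg : Integrable g μ)
    (h : ∫⁻ a, ENNReal.ofReal (f a) ∂μ = ∫⁻ a, ENNReal.ofReal (g a) ∂μ) :
    Integrable f μ ∧ ∫ a, f a ∂μ = ∫ a, g a ∂μ :=
  ⟨⟨hf, (hasFiniteIntegral_iff_ofReal hf₀).2 (h ▸ (hasFiniteIntegral_iff_ofReal hg₀).1 hg.2)⟩,
    by rw [integral_eq_lintegral_of_nonneg_ae hf₀ hf, integral_eq_lintegral_of_nonneg_ae hg₀ hg.1,
      h]⟩

lemma integrableOn_Ioi_and_integral_Ioi_eq {p : ℝ → ℝ} {x : ℝ} (hx : 0 ≤ x)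
    (hp : Measurable p) (hnn : ∀ ξ > x, 0 ≤ p ξ)
    (hloc : ∀ t > x, IntegrableOn (fun ξ => ξ ^ 2 * p ξ) (Ioc x t))
    (hint : IntegrableOn (fun t => t ^ (-3 : ℝ) * ∫ ξ in Ioc x t, ξ ^ 2 * p ξ) (Ioi x)) :
    IntegrableOn p (Ioi x) ∧
      ∫ ξ in Ioi x, p ξ = 2 * ∫ t in Ioi x, t ^ (-3 : ℝ) * ∫ ξ in Ioc x t, ξ ^ 2 * p ξ := by
  have hI₀ : ∀ t, 0 ≤ ∫ ξ in Ioc x t, ξ ^ 2 * p ξ := fun t =>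
    setIntegral_nonneg measurableSet_Ioc fun ξ hξ => mul_nonneg (sq_nonneg ξ) (hnn ξ hξ.1)
  rw [← integral_const_mul]
  refine integrable_and_integral_eq_of_lintegral_ofReal_eq
    ((ae_restrict_mem measurableSet_Ioi).mono hnn) hp.aestronglyMeasurable.restrict
    ((ae_restrict_mem measurableSet_Ioi).mono fun t ht => ?_) (hint.const_mul 2) ?_
  · exact mul_nonneg zero_le_two (mul_nonneg (rpow_nonneg (hx.trans ht.le) _) (hI₀ t))
  rw [lintegral_Ioi_eq_lintegral_Ioi_mul_lintegral_Ioc hx hp.ennreal_ofReal]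
  refine setLIntegral_congr_fun measurableSet_Ioi fun t ht => ?_
  rw [← mul_assoc, ENNReal.ofReal_mul (mul_nonneg zero_le_two (rpow_nonneg (hx.trans ht.le) _)),
    ofReal_integral_eq_lintegral_ofReal (hloc t ht) ((ae_restrict_mem measurableSet_Ioc).mono
      fun ξ hξ => mul_nonneg (sq_nonneg ξ) (hnn ξ hξ.1))]
  simp_rw [ENNReal.ofReal_mul (sq_nonneg _)]

section Averaging

variable {f : ℝ → ℝ} {γ : ℝ}

lemma eventually_integrableOn_Ioi_rpow_neg_two_mul (hf : AEStronglyMeasurable f)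
    (hlim : Tendsto f atTop (𝓝 γ)) :
    ∀ᶠ x in atTop, IntegrableOn (fun t => t ^ (-2 : ℝ) * f t) (Ioi x) := by
  obtain ⟨a, ha⟩ := eventually_atTop.1
    ((hlim.norm.eventually (gt_mem_nhds (lt_add_one ‖γ‖))).and (eventually_gt_atTop 0))
  filter_upwards [eventually_ge_atTop a] with x hx
  have hker := integrableOn_Ioi_rpow_of_lt (by norm_num : (-2 : ℝ) < -1) (ha x hx).2
  refine Integrable.mono' (hker.mul_const (‖γ‖ + 1))
    ((by fun_prop : Measurable fun t : ℝ => t ^ (-2 : ℝ)).aestronglyMeasurable.mul hf).restrict ?_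
  filter_upwards [ae_restrict_mem measurableSet_Ioi] with t ht
  have ht' := ha t (hx.trans ht.le)
  rw [norm_mul, norm_of_nonneg (rpow_nonneg ht'.2.le _)]
  exact mul_le_mul_of_nonneg_left ht'.1.le (rpow_nonneg ht'.2.le _)

lemma tendsto_mul_integral_Ioi_rpow_neg_two_mul (hf : AEStronglyMeasurable f)
    (hlim : Tendsto f atTop (𝓝 γ)) :
    Tendsto (fun x => x * ∫ t in Ioi x, t ^ (-2 : ℝ) * f t) atTop (𝓝 γ) := by
  refine Metric.tendsto_atTop.2 fun ε hε => ?_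
  obtain ⟨a, ha⟩ := eventually_atTop.1
    ((eventually_atTop.2 (Metric.tendsto_atTop.1 hlim (ε / 2) (half_pos hε))).and
      ((eventually_integrableOn_Ioi_rpow_neg_two_mul hf hlim).and (eventually_gt_atTop 0)))
  refine ⟨a, fun x hx => ?_⟩
  obtain ⟨-, hint, hx0⟩ := ha x hx
  have hker := integrableOn_Ioi_rpow_of_lt (by norm_num : (-2 : ℝ) < -1) hx0
  have hdev : ‖∫ t in Ioi x, t ^ (-2 : ℝ) * (f t - γ)‖ ≤ ε / 2 * x⁻¹ := by
    rw [← integral_Ioi_rpow_neg_two hx0, ← integral_const_mul]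
    refine norm_integral_le_of_norm_le (hker.const_mul _) ?_
    filter_upwards [ae_restrict_mem measurableSet_Ioi] with t ht
    have ht0 : 0 < t := hx0.trans ht
    rw [norm_mul, norm_of_nonneg (rpow_nonneg ht0.le _), mul_comm]
    exact mul_le_mul_of_nonneg_right (ha t (hx.trans ht.le)).1.le (rpow_nonneg ht0.le _)
  have hsplit : x * ∫ t in Ioi x, t ^ (-2 : ℝ) * f t =
      γ + x * ∫ t in Ioi x, t ^ (-2 : ℝ) * (f t - γ) := by
    simp only [mul_sub]
    rw [integral_sub hint (hker.mul_const γ), integral_mul_const, integral_Ioi_rpow_neg_two hx0]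
    field_simp
    ring
  rw [dist_eq_norm, hsplit, add_sub_cancel_left, norm_mul, norm_of_nonneg hx0.le]
  calc x * ‖∫ t in Ioi x, t ^ (-2 : ℝ) * (f t - γ)‖ ≤ x * (ε / 2 * x⁻¹) := by gcongr
    _ = ε / 2 := by field_simp
    _ < ε := half_lt_self hε

end Averaging

lemma integrableOn_of_integrableOn_sq_mul {p : ℝ → ℝ} {s : Set ℝ} (hs : MeasurableSet s)
    (hs₁ : ∀ ξ ∈ s, 1 ≤ ξ) (hp : AEStronglyMeasurable p) (hnn : ∀ ξ ∈ s, 0 ≤ p ξ)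
    (h : IntegrableOn (fun ξ => ξ ^ 2 * p ξ) s) : IntegrableOn p s := by
  refine h.mono' hp.restrict ((ae_restrict_mem hs).mono fun ξ hξ => ?_)
  rw [norm_of_nonneg (hnn ξ hξ)]
  exact le_mul_of_one_le_left (hnn ξ hξ) (one_le_pow₀ (hs₁ ξ hξ))

noncomputable def secondMoment (p : ℝ → ℝ) (x : ℝ) : ℝ := ∫ ξ in Ioc 0 x, ξ ^ 2 * p ξ

section SecondMoment

variable {p : ℝ → ℝ}

lemma secondMoment_sub_secondMoment {a b : ℝ} (ha : 0 ≤ a) (hab : a ≤ b)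
    (hb : IntegrableOn (fun ξ => ξ ^ 2 * p ξ) (Ioc 0 b)) :
    secondMoment p b - secondMoment p a = ∫ ξ in Ioc a b, ξ ^ 2 * p ξ := by
  rw [secondMoment, secondMoment, ← Ioc_union_Ioc_eq_Ioc ha hab,
    setIntegral_union (Ioc_disjoint_Ioc_of_le le_rfl) measurableSet_Ioc
      (hb.mono_set (Ioc_subset_Ioc_right hab)) (hb.mono_set (Ioc_subset_Ioc_left ha)),
    add_sub_cancel_left]

variable (hnn : ∀ ξ > 0, 0 ≤ p ξ)
  (hloc : ∀ x > 0, IntegrableOn (fun ξ => ξ ^ 2 * p ξ) (Ioc 0 x))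
include hnn hloc

lemma secondMoment_monotone : Monotone (secondMoment p) := by
  intro a b hab
  rcases le_or_gt b 0 with hb | hb
  · simp [secondMoment, Ioc_eq_empty_of_le (hab.trans hb), Ioc_eq_empty_of_le hb]
  · exact setIntegral_mono_set (hloc b hb)
        ((ae_restrict_mem measurableSet_Ioc).mono
        fun ξ hξ => mul_nonneg (sq_nonneg ξ) (hnn ξ hξ.1))
      (Ioc_subset_Ioc_right hab).eventuallyLE

lemma mul_integral_Ioi_eq_sub_secondMoment (hp : Measurable p) {x : ℝ} (hx : 0 < x)
    (hint : IntegrableOn (fun t => t ^ (-2 : ℝ) * (secondMoment p t / t)) (Ioi x)) :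
    IntegrableOn p (Ioi x) ∧ x * ∫ ξ in Ioi x, p ξ =
      2 * (x * ∫ t in Ioi x, t ^ (-2 : ℝ) * (secondMoment p t / t)) - secondMoment p x / x := by
  have hker := integrableOn_Ioi_rpow_of_lt (by norm_num : (-3 : ℝ) < -1) hx
  have hrw : EqOn (fun t => t ^ (-3 : ℝ) * ∫ ξ in Ioc x t, ξ ^ 2 * p ξ)
      (fun t => t ^ (-2 : ℝ) * (secondMoment p t / t) - secondMoment p x * t ^ (-3 : ℝ))
      (Ioi x) := by
    intro t ht
    dsimp only
    rw [← secondMoment_sub_secondMoment hx.le ht.le (hloc t (hx.trans ht)),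
      show (-3 : ℝ) = -2 - 1 by norm_num, rpow_sub_one (hx.trans ht).ne']
    ring
  obtain ⟨hpint, hpeq⟩ := integrableOn_Ioi_and_integral_Ioi_eq hx.le hp
    (fun ξ hξ => hnn ξ (hx.trans hξ))
    (fun t ht => (hloc t (hx.trans ht)).mono_set (Ioc_subset_Ioc_left hx.le))
    ((hint.sub (hker.const_mul _)).congr_fun hrw.symm measurableSet_Ioi)
  refine ⟨hpint, ?_⟩
  rw [hpeq, setIntegral_congr_fun measurableSet_Ioi hrw, integral_sub hint (hker.const_mul _),
    integral_const_mul, integral_Ioi_rpow_of_lt (by norm_num) hx]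
  norm_num
  field_simp

end SecondMoment

theorem tail_functional_tauberian_general (pstar : ℝ → ℝ) (hmeas : Measurable pstar)
    (hnn : ∀ x : ℝ, 0 < x → 0 ≤ pstar x)
    (hloc : ∀ x > (0:ℝ), IntegrableOn (fun ξ => ξ ^ 2 * pstar ξ) (Set.Ioc 0 x))
    (γ : ℝ)
    (hlim : Filter.Tendsto (fun x : ℝ => (1 / x) * ∫ ξ in Set.Ioc (0:ℝ) x, ξ ^ 2 * pstar ξ)
      Filter.atTop (nhds γ)) :
    IntegrableOn pstar (Set.Ici 1) ∧
    Filter.Tendsto (fun x : ℝ => x * ∫ ξ in Set.Ioi x, pstar ξ)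
      Filter.atTop (nhds γ) := by
  have hH : Tendsto (fun x => secondMoment pstar x / x) atTop (𝓝 γ) :=
    hlim.congr fun x => by rw [one_div, inv_mul_eq_div, secondMoment]
  have hHm : AEStronglyMeasurable (fun t => secondMoment pstar t / t) :=
    ((secondMoment_monotone hnn hloc).measurable.div measurable_id).aestronglyMeasurable
  obtain ⟨x₀, hx₀⟩ := eventually_atTop.1
    ((eventually_integrableOn_Ioi_rpow_neg_two_mul hHm hH).and (eventually_ge_atTop 1))
  have htail (x : ℝ) (hx : x₀ ≤ x) := mul_integral_Ioi_eq_sub_secondMoment hnn hloc hmeas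
    (zero_lt_one.trans_le (hx₀ x hx).2) (hx₀ x hx).1
  refine ⟨?_, ?_⟩
  · rw [← Icc_union_Ioi_eq_Ici (hx₀ x₀ le_rfl).2]
    refine (integrableOn_of_integrableOn_sq_mul measurableSet_Icc (fun ξ hξ => hξ.1)
      hmeas.aestronglyMeasurable (fun ξ hξ => hnn ξ (zero_lt_one.trans_le hξ.1)) ?_).union
      (htail x₀ le_rfl).1
    exact (hloc x₀ (zero_lt_one.trans_le (hx₀ x₀ le_rfl).2)).mono_set
      fun ξ hξ => ⟨zero_lt_one.trans_le hξ.1, hξ.2⟩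
  · have hlim' := ((tendsto_mul_integral_Ioi_rpow_neg_two_mul hHm hH).const_mul 2).sub hH
    rw [two_mul, add_sub_cancel_right] at hlim'
    exact hlim'.congr' (eventually_atTop.2 ⟨x₀, fun x hx => (htail x hx).2.symm⟩)

/-- Tauberian-type result: if the averaged second moment
`(1/x)∫₀ˣ ξ² p*(ξ) dξ` of a non-negative measurable function `p*` converges to `γ`,
then `p*` is integrable on `[1,∞)` and the tail functional `x ∫_x^∞ p*(ξ) dξ` converges
to the same limit `γ`. -/
theorem tail_functional_tauberian (pstar : ℝ → ℝ) (hmeas : Measurable pstar)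
    (hnn : ∀ x : ℝ, 0 < x → 0 ≤ pstar x)
    (hloc : ∀ x > (0:ℝ), IntegrableOn (fun ξ => ξ ^ 2 * pstar ξ) (Set.Ioc 0 x))
    (γ : ℝ) (hγ : 0 ≤ γ)
    (hlim : Filter.Tendsto (fun x : ℝ => (1 / x) * ∫ ξ in Set.Ioc (0:ℝ) x, ξ ^ 2 * pstar ξ)
      Filter.atTop (nhds γ)) :
    IntegrableOn pstar (Set.Ici 1) ∧
    Filter.Tendsto (fun x : ℝ => x * ∫ ξ in Set.Ioi x, pstar ξ)
      Filter.atTop (nhds γ) :=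
  tail_functional_tauberian_general pstar hmeas hnn hloc γ hlim
end
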